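/- arXiv:quant-ph/0208121 — 5 statements merged into one kernel-verified Lean document; each statement's English description precedes it below -/
import Mathlib

section
/- Let p : Fin 13 → ℝ be nonnegative with labels E1,E2,F2,E3,F3,E4,E5,E6,E7,F,F4,F5,E8 such that each of the seven triples (E1,E2,F2), (E1,E3,F3), (E2,E4,E6), (E3,E5,E7), (E6,E7,F), (E4,E8,F4), (E5,E8,F5) sums to 1. Then p(E1) + p(E8) ≤ 3/2. -/
/-- Labels: 0=E1, 1=E2, 2=F2, 3=E3, 4=F3, 5=E4, 6=E5, 7=E6, 8=E7, 9=F, 10=F4, 11=F5, 12=E8. -/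
theorem uncertainty_relation
    (p : Fin 13 → ℝ)
    (hnn : ∀ i, 0 ≤ p i)
    (h1 : p 0 + p 1 + p 2 = 1)   -- (E1,E2,F2)
    (h2 : p 0 + p 3 + p 4 = 1)   -- (E1,E3,F3)
    (h3 : p 1 + p 5 + p 7 = 1)   -- (E2,E4,E6)
    (h4 : p 3 + p 6 + p 8 = 1)   -- (E3,E5,E7)
    (h5 : p 7 + p 8 + p 9 = 1)   -- (E6,E7,F)
    (h6 : p 5 + p 12 + p 10 = 1) -- (E4,E8,F4)
    (h7 : p 6 + p 12 + p 11 = 1) -- (E5,E8,F5)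
    : p 0 + p 12 ≤ 3 / 2 := by
  have hE6E7 : p 7 + p 8 ≤ 1 := by linarith [hnn 9]
  have hE2345 : 1 ≤ p 1 + p 3 + p 5 + p 6 := by linarith
  -- h1 + h2 + h6 + h7 reads 2 (p E1 + p E8) + (p E2 + p E3 + p E4 + p E5) + (p F2 + p F3 + p F4 + p F5) = 4.
  linarith [hnn 2, hnn 4, hnn 10, hnn 11]
end

section
/- Under the same seven sum-to-one constraints on nonnegative p : Fin 13 → ℝ, if p(E1) = 1 then p(E8) ≤ 1/2. -/
/-!
If E1 is certain, the triples through E1 force p(E2) = p(E3) = 0. The triples (E2,E4,E6) and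
(E4,E8,F4) then give p(E8) ≤ 1 - p(E4) = p(E6), and symmetrically p(E8) ≤ p(E7). Since E6 and
E7 lie in the common triple (E6,E7,F), 2 p(E8) ≤ p(E6) + p(E7) ≤ 1.
-/

/-- Labels: 0=E1, 1=E2, 2=F2, 3=E3, 4=F3, 5=E4, 6=E5, 7=E6, 8=E7, 9=F, 10=F4, 11=F5, 12=E8. -/
theorem uncertainty_relation_certain
    (p : Fin 13 → ℝ)
    (hnn : ∀ i, 0 ≤ p i)
    (h1 : p 0 + p 1 + p 2 = 1)   -- (E1,E2,F2)
    (h2 : p 0 + p 3 + p 4 = 1)   -- (E1,E3,F3)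
    (h3 : p 1 + p 5 + p 7 = 1)   -- (E2,E4,E6)
    (h4 : p 3 + p 6 + p 8 = 1)   -- (E3,E5,E7)
    (h5 : p 7 + p 8 + p 9 = 1)   -- (E6,E7,F)
    (h6 : p 5 + p 12 + p 10 = 1) -- (E4,E8,F4)
    (h7 : p 6 + p 12 + p 11 = 1) -- (E5,E8,F5)
    (hE1 : p 0 = 1) : p 12 ≤ 1 / 2 := by
  have hE2 : p 1 = 0 := by linarith [hnn 1, hnn 2]
  have hE3 : p 3 = 0 := by linarith [hnn 3, hnn 4]
  have hE8_le_E6 : p 12 ≤ p 7 := by linarith [hnn 10]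
  have hE8_le_E7 : p 12 ≤ p 8 := by linarith [hnn 11]
  linarith [hnn 9]
end

section
/- Let (Ω, μ) be a probability space and A1, B1, C1, A2, B2, C2 measurable events. Then μ(A1ᶜ∩B1∩C1) + μ(A1∩B1ᶜ∩C1) + μ(A1∩B1∩C1ᶜ) + μ(A1ᶜ∩B1ᶜ∩C1ᶜ) + μ(A1∩B2∩C2) + μ(A1ᶜ∩B2ᶜ∩C2) + μ(A1ᶜ∩B2∩C2ᶜ) + μ(A1∩B2ᶜ∩C2ᶜ) + μ(A2∩B1∩C2) + μ(A2ᶜ∩B1ᶜ∩C2) + μ(A2ᶜ∩B1∩C2ᶜ) + μ(A2∩B1ᶜ∩C2ᶜ) + μ(A2∩B2∩C1) + μ(A2ᶜ∩B2ᶜ∩C1) + μ(A2ᶜ∩B2∩C1ᶜ) + μ(A2∩B2ᶜ∩C1ᶜ) ≤ 3. -/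
/-!
Reading membership in a set as a bit, each block of four events in the sum is a disjoint
decomposition of a parity event: the first block is `(A1 ∆ B1 ∆ C1)ᶜ`, the others are
`A1 ∆ B2 ∆ C2`, `A2 ∆ B1 ∆ C2` and `A2 ∆ B2 ∆ C1`. Each of `A2, B2, C2` occurs twice in the last
three, so a point in all three of them lies in `A1 ∆ B1 ∆ C1`; hence the four parity events have
empty intersection, and the complements of four events with empty intersection cover the space,
so their probabilities add up to at most `4 - 1 = 3`.
-/

open MeasureTheory Set

open scoped symmDiff

section

variable {Ω : Type*} [MeasurableSpace Ω] {μ : Measure Ω}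

theorem sum_measure_le_card_sub_one_of_iInter_eq_empty [IsProbabilityMeasure μ] {ι : Type*}
    [Fintype ι] {t : ι → Set Ω} (ht : ∀ i, MeasurableSet (t i)) (h : ⋂ i, t i = ∅) :
    ∑ i, μ (t i) ≤ Fintype.card ι - 1 := by
  refine ENNReal.le_sub_of_add_le_right ENNReal.one_ne_top ?_
  calc ∑ i, μ (t i) + 1 = ∑ i, μ (t i) + μ (⋃ i, (t i)ᶜ) := by
        rw [← compl_iInter, h, compl_empty, measure_univ]
    _ ≤ ∑ i, μ (t i) + ∑ i, μ (t i)ᶜ := by gcongr; exact measure_iUnion_fintype_le μ _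
    _ = Fintype.card ι := by
        simp [← Finset.sum_add_distrib, measure_add_measure_compl (ht _)]

theorem measure_compl_symmDiff_symmDiff {a b c : Set Ω} (ha : MeasurableSet a)
    (hb : MeasurableSet b) (hc : MeasurableSet c) :
    μ (aᶜ ∩ b ∩ c) + μ (a ∩ bᶜ ∩ c) + μ (a ∩ b ∩ cᶜ) + μ (aᶜ ∩ bᶜ ∩ cᶜ) = μ (a ∆ b ∆ c)ᶜ := by
  have hunion : (a ∆ b ∆ c)ᶜ = aᶜ ∩ b ∩ c ∪ a ∩ bᶜ ∩ c ∪ a ∩ b ∩ cᶜ ∪ aᶜ ∩ bᶜ ∩ cᶜ := by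
    ext ω; simp only [mem_compl_iff, mem_symmDiff, mem_union, mem_inter_iff]; tauto
  rw [hunion, measure_union, measure_union, measure_union]
  all_goals first
    | measurability
    | (rw [Set.disjoint_left]; intro ω; simp only [mem_compl_iff, mem_union, mem_inter_iff]; tauto)

theorem measure_symmDiff_symmDiff {a b c : Set Ω} (ha : MeasurableSet a)
    (hb : MeasurableSet b) (hc : MeasurableSet c) :
    μ (a ∩ b ∩ c) + μ (aᶜ ∩ bᶜ ∩ c) + μ (aᶜ ∩ b ∩ cᶜ) + μ (a ∩ bᶜ ∩ cᶜ) = μ (a ∆ b ∆ c) := by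
  have h := measure_compl_symmDiff_symmDiff (μ := μ) ha.compl hb hc
  rw [compl_compl] at h
  convert h using 2
  ext ω; simp only [mem_compl_iff, mem_symmDiff]; tauto

end

theorem ghz_parity_inter_eq_empty {Ω : Type*} (A1 B1 C1 A2 B2 C2 : Set Ω) :
    (A1 ∆ B1 ∆ C1)ᶜ ∩ (A1 ∆ B2 ∆ C2) ∩ (A2 ∆ B1 ∆ C2) ∩ (A2 ∆ B2 ∆ C1) = ∅ := by
  ext ω; simp only [mem_inter_iff, mem_compl_iff, mem_symmDiff, mem_empty_iff_false]; tauto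

/-- Boole's "condition of possible experience" for the GHZ events: in any
classical probability space the sixteen probabilities sum to at most 3. -/
theorem boole_ghz_inequality {Ω : Type*} [MeasurableSpace Ω]
    (μ : Measure Ω) [IsProbabilityMeasure μ]
    (A1 B1 C1 A2 B2 C2 : Set Ω)
    (hA1 : MeasurableSet A1) (hB1 : MeasurableSet B1) (hC1 : MeasurableSet C1)
    (hA2 : MeasurableSet A2) (hB2 : MeasurableSet B2) (hC2 : MeasurableSet C2) :
    μ (A1ᶜ ∩ B1 ∩ C1) + μ (A1 ∩ B1ᶜ ∩ C1) + μ (A1 ∩ B1 ∩ C1ᶜ) + μ (A1ᶜ ∩ B1ᶜ ∩ C1ᶜ) +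
    μ (A1 ∩ B2 ∩ C2) + μ (A1ᶜ ∩ B2ᶜ ∩ C2) + μ (A1ᶜ ∩ B2 ∩ C2ᶜ) + μ (A1 ∩ B2ᶜ ∩ C2ᶜ) +
    μ (A2 ∩ B1 ∩ C2) + μ (A2ᶜ ∩ B1ᶜ ∩ C2) + μ (A2ᶜ ∩ B1 ∩ C2ᶜ) + μ (A2 ∩ B1ᶜ ∩ C2ᶜ) +
    μ (A2 ∩ B2 ∩ C1) + μ (A2ᶜ ∩ B2ᶜ ∩ C1) + μ (A2ᶜ ∩ B2 ∩ C1ᶜ) + μ (A2 ∩ B2ᶜ ∩ C1ᶜ)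
      ≤ 3 := by
  set E : Fin 4 → Set Ω := ![(A1 ∆ B1 ∆ C1)ᶜ, A1 ∆ B2 ∆ C2, A2 ∆ B1 ∆ C2, A2 ∆ B2 ∆ C1]
  have hE : ∀ i, MeasurableSet (E i) := by
    intro i
    fin_cases i
    exacts [((hA1.symmDiff hB1).symmDiff hC1).compl, (hA1.symmDiff hB2).symmDiff hC2,
      (hA2.symmDiff hB1).symmDiff hC2, (hA2.symmDiff hB2).symmDiff hC1]
  have hempty : ⋂ i, E i = ∅ := by
    rw [← subset_empty_iff, ← ghz_parity_inter_eq_empty A1 B1 C1 A2 B2 C2]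
    intro ω hω
    rw [mem_iInter] at hω
    exact ⟨⟨⟨hω 0, hω 1⟩, hω 2⟩, hω 3⟩
  calc _ = ∑ i, μ (E i) := by
        simp only [Fin.sum_univ_four, E, Matrix.cons_val]
        rw [← measure_compl_symmDiff_symmDiff hA1 hB1 hC1,
          ← measure_symmDiff_symmDiff hA1 hB2 hC2, ← measure_symmDiff_symmDiff hA2 hB1 hC2,
          ← measure_symmDiff_symmDiff hA2 hB2 hC1]
        ring
    _ ≤ Fintype.card (Fin 4) - 1 := sum_measure_le_card_sub_one_of_iInter_eq_empty hE hempty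
    _ = 3 := ENNReal.sub_eq_of_eq_add ENNReal.one_ne_top (by norm_num)
end

section
/- Let (Ω, μ) be a probability space and a1,b1,c1,a2,b2,c2 : Ω → {-1,1} measurable. Then μ{a1b1c1 = -1} + μ{a1b2c2 = 1} + μ{a2b1c2 = 1} + μ{a2b2c1 = 1} ≤ 3. -/
open MeasureTheory

/-- The probabilistic GHZ bound: for ±1-valued measurable random variables on a
probability space, the four GHZ event probabilities sum to at most 3. -/
theorem ghz_probability_bound {Ω : Type*} [MeasurableSpace Ω]
    (μ : Measure Ω) [IsProbabilityMeasure μ]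
    (a1 b1 c1 a2 b2 c2 : Ω → ℝ)
    (ha1 : ∀ ω, a1 ω = 1 ∨ a1 ω = -1) (hb1 : ∀ ω, b1 ω = 1 ∨ b1 ω = -1)
    (hc1 : ∀ ω, c1 ω = 1 ∨ c1 ω = -1) (ha2 : ∀ ω, a2 ω = 1 ∨ a2 ω = -1)
    (hb2 : ∀ ω, b2 ω = 1 ∨ b2 ω = -1) (hc2 : ∀ ω, c2 ω = 1 ∨ c2 ω = -1)
    (ma1 : Measurable a1) (mb1 : Measurable b1) (mc1 : Measurable c1)
    (ma2 : Measurable a2) (mb2 : Measurable b2) (mc2 : Measurable c2) :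
    μ {ω | a1 ω * b1 ω * c1 ω = -1} + μ {ω | a1 ω * b2 ω * c2 ω = 1} +
    μ {ω | a2 ω * b1 ω * c2 ω = 1} + μ {ω | a2 ω * b2 ω * c1 ω = 1} ≤ 3 := by
  set A := {ω | a1 ω * b1 ω * c1 ω = -1}
  set B := {ω | a1 ω * b2 ω * c2 ω = 1}
  set C := {ω | a2 ω * b1 ω * c2 ω = 1}
  set D := {ω | a2 ω * b2 ω * c1 ω = 1}
  have mB : MeasurableSet B := (ma1.mul mb2 |>.mul mc2) (measurableSet_singleton 1)
  have mC : MeasurableSet C := (ma2.mul mb1 |>.mul mc2) (measurableSet_singleton 1)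
  have mD : MeasurableSet D := (ma2.mul mb2 |>.mul mc1) (measurableSet_singleton 1)
  have hsub : A ⊆ Bᶜ ∪ Cᶜ ∪ Dᶜ := by
    intro ω hω
    by_contra h
    simp only [Set.mem_union, Set.mem_compl_iff, not_or, not_not] at h
    obtain ⟨⟨hB, hC⟩, hD⟩ := h
    have hA : a1 ω * b1 ω * c1 ω = -1 := hω
    have key : (a1 ω * b1 ω * c1 ω) * (a1 ω * b2 ω * c2 ω) * (a2 ω * b1 ω * c2 ω)
        * (a2 ω * b2 ω * c1 ω) = 1 := by
      have sq : ∀ f : Ω → ℝ, (∀ ω, f ω = 1 ∨ f ω = -1) → f ω * f ω = 1 := by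
        intro f hf; rcases hf ω with h | h <;> rw [h] <;> norm_num
      have e1 := sq a1 ha1; have e2 := sq a2 ha2; have e3 := sq b1 hb1
      have e4 := sq b2 hb2; have e5 := sq c1 hc1; have e6 := sq c2 hc2
      have : a1 ω * b1 ω * c1 ω * (a1 ω * b2 ω * c2 ω) * (a2 ω * b1 ω * c2 ω)
          * (a2 ω * b2 ω * c1 ω)
          = (a1 ω * a1 ω) * (a2 ω * a2 ω) * (b1 ω * b1 ω) * (b2 ω * b2 ω)
            * (c1 ω * c1 ω) * (c2 ω * c2 ω) := by ring
      rw [this, e1, e2, e3, e4, e5, e6]; norm_num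
    rw [hA, hB, hC, hD] at key
    norm_num at key
  have hμA : μ A ≤ μ Bᶜ + μ Cᶜ + μ Dᶜ :=
    le_trans (measure_mono hsub) (le_trans (measure_union_le _ _)
      (add_le_add_left (measure_union_le _ _) _))
  have hcB : μ Bᶜ = 1 - μ B := prob_compl_eq_one_sub mB
  have hcC : μ Cᶜ = 1 - μ C := prob_compl_eq_one_sub mC
  have hcD : μ Dᶜ = 1 - μ D := prob_compl_eq_one_sub mD
  have h1 : (1 : ENNReal) - μ B + μ B = 1 := tsub_add_cancel_of_le prob_le_one
  have h2 : (1 : ENNReal) - μ C + μ C = 1 := tsub_add_cancel_of_le prob_le_one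
  have h3 : (1 : ENNReal) - μ D + μ D = 1 := tsub_add_cancel_of_le prob_le_one
  calc μ A + μ B + μ C + μ D ≤ (μ Bᶜ + μ Cᶜ + μ Dᶜ) + μ B + μ C + μ D := by
        gcongr
    _ = ((1 - μ B) + μ B) + ((1 - μ C) + μ C) + ((1 - μ D) + μ D) := by
        rw [hcB, hcC, hcD]; ring
    _ = 3 := by rw [h1, h2, h3]; norm_num
end

section
/- In the GHZ gamble, suppose for each of the four algebras B1–B4 the probabilities of its eight atoms are nonnegative and sum to 1, and the probabilities of the four atoms not listed in (1) vanish in each algebra (as forced by p(S)=1). Then the sum P of the probabilities of the sixteen events listed in (1) equals 4, while for any classical probability measure on six events A1,B1,C1,A2,B2,C2 the corresponding sum is at most 3; hence no classical probability measure reproduces these sixteen probabilities. -/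
/-!
Let `Uᵢ` be the union of the four events of algebra `i`. A point lies in `U₀` iff it lies in an
even number of `A1, B1, C1`, and in `U₁, U₂, U₃` iff it lies in an odd number of `A1, B2, C2`,
`A2, B1, C2`, `A2, B2, C1` respectively. Each of the six sets occurs in exactly two of these
triples, so the four parities add up to an even number and no point lies in all four `Uᵢ`. For a
probability measure, four events with empty intersection have total probability at most `3`,
since their complements cover the space. Hence the classical sum is at most `3`, whereas
each algebra contributes `1` to the quantum sum `P = 4`.
-/

open MeasureTheory

/-- The sixteen GHZ events of (1), arranged by algebra `B1,…,B4` (first index)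
and by slot within each algebra (second index). -/
def ghzEvents {Ω : Type*} (A1 B1 C1 A2 B2 C2 : Set Ω) : Fin 4 → Fin 4 → Set Ω :=
  ![![A1ᶜ ∩ B1 ∩ C1, A1 ∩ B1ᶜ ∩ C1, A1 ∩ B1 ∩ C1ᶜ, A1ᶜ ∩ B1ᶜ ∩ C1ᶜ],
    ![A1 ∩ B2 ∩ C2, A1ᶜ ∩ B2ᶜ ∩ C2, A1ᶜ ∩ B2 ∩ C2ᶜ, A1 ∩ B2ᶜ ∩ C2ᶜ],
    ![A2 ∩ B1 ∩ C2, A2ᶜ ∩ B1ᶜ ∩ C2, A2ᶜ ∩ B1 ∩ C2ᶜ, A2 ∩ B1ᶜ ∩ C2ᶜ],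
    ![A2 ∩ B2 ∩ C1, A2ᶜ ∩ B2ᶜ ∩ C1, A2ᶜ ∩ B2 ∩ C1ᶜ, A2 ∩ B2ᶜ ∩ C1ᶜ]]

theorem sum_measureReal_le_card_sub_one_of_iInter_eq_empty {Ω ι : Type*} [MeasurableSpace Ω]
    [Fintype ι] {μ : Measure Ω} [IsProbabilityMeasure μ] {U : ι → Set Ω}
    (hU : ∀ i, MeasurableSet (U i)) (h : ⋂ i, U i = ∅) :
    ∑ i, μ.real (U i) ≤ Fintype.card ι - 1 :=
  calc ∑ i, μ.real (U i) = Fintype.card ι - ∑ i, μ.real (U i)ᶜ := by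
        simp [probReal_compl_eq_one_sub (hU _), Finset.sum_sub_distrib]
    _ ≤ Fintype.card ι - μ.real (⋃ i, (U i)ᶜ) := by
        gcongr
        exact measureReal_iUnion_fintype_le _
    _ = Fintype.card ι - 1 := by
        rw [← Set.compl_iInter, h, Set.compl_empty, probReal_univ]

section
variable {Ω : Type*} {A1 B1 C1 A2 B2 C2 : Set Ω}

theorem measurableSet_ghzEvents [MeasurableSpace Ω]
    (hA1 : MeasurableSet A1) (hB1 : MeasurableSet B1) (hC1 : MeasurableSet C1)
    (hA2 : MeasurableSet A2) (hB2 : MeasurableSet B2) (hC2 : MeasurableSet C2) (i j : Fin 4) :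
    MeasurableSet (ghzEvents A1 B1 C1 A2 B2 C2 i j) := by
  fin_cases i <;> fin_cases j <;> simp [ghzEvents, MeasurableSet.inter, *]

open Function in
theorem pairwise_disjoint_ghzEvents (i : Fin 4) :
    Pairwise (Disjoint on (ghzEvents A1 B1 C1 A2 B2 C2 i)) := by
  intro j k hjk
  fin_cases i <;> fin_cases j <;> fin_cases k <;>
    simp_all [ghzEvents, onFun, Set.disjoint_left]

variable (A1 B1 C1 A2 B2 C2) in
theorem iInter_iUnion_ghzEvents_eq_empty :
    ⋂ i, ⋃ j, ghzEvents A1 B1 C1 A2 B2 C2 i j = ∅ := by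
  ext ω
  simp only [ghzEvents, Set.mem_iInter, Set.mem_iUnion, Fin.forall_fin_succ, Fin.exists_fin_succ,
    Matrix.cons_val_zero, Matrix.cons_val_succ, Set.mem_inter_iff, Set.mem_compl_iff,
    Set.mem_empty_iff_false, iff_false]
  by_cases ω ∈ A1 <;> by_cases ω ∈ B1 <;> by_cases ω ∈ C1 <;>
    by_cases ω ∈ A2 <;> by_cases ω ∈ B2 <;> by_cases ω ∈ C2 <;> simp_all

theorem sum_measureReal_ghzEvents_le_three [MeasurableSpace Ω] (μ : Measure Ω)
    [IsProbabilityMeasure μ]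
    (hA1 : MeasurableSet A1) (hB1 : MeasurableSet B1) (hC1 : MeasurableSet C1)
    (hA2 : MeasurableSet A2) (hB2 : MeasurableSet B2) (hC2 : MeasurableSet C2) :
    ∑ i, ∑ j, μ.real (ghzEvents A1 B1 C1 A2 B2 C2 i j) ≤ 3 := by
  have hmeas := measurableSet_ghzEvents hA1 hB1 hC1 hA2 hB2 hC2
  have hrow (i : Fin 4) : ∑ j, μ.real (ghzEvents A1 B1 C1 A2 B2 C2 i j) =
      μ.real (⋃ j, ghzEvents A1 B1 C1 A2 B2 C2 i j) :=
    (measureReal_iUnion_fintype (pairwise_disjoint_ghzEvents i) (hmeas i)).symm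
  calc ∑ i, ∑ j, μ.real (ghzEvents A1 B1 C1 A2 B2 C2 i j)
      = ∑ i, μ.real (⋃ j, ghzEvents A1 B1 C1 A2 B2 C2 i j) := by simp only [hrow]
    _ ≤ Fintype.card (Fin 4) - 1 :=
      sum_measureReal_le_card_sub_one_of_iInter_eq_empty (fun i ↦ .iUnion (hmeas i))
        (iInter_iUnion_ghzEvents_eq_empty A1 B1 C1 A2 B2 C2)
    _ = 3 := by norm_num

end

/-- Probabilities of algebra `i` are `p i 0, …, p i 3` for the listed atoms and
`p i 4, …, p i 7` for the unlisted ones. -/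
theorem ghz_gamble_no_classical_model
    (p : Fin 4 → Fin 8 → ℝ)
    (hsum : ∀ i, ∑ j, p i j = 1)
    (hzero : ∀ i, ∀ j : Fin 8, 4 ≤ (j : ℕ) → p i j = 0) :
    (∑ i : Fin 4, (p i 0 + p i 1 + p i 2 + p i 3)) = 4 ∧
    (∀ (Ω : Type) (_ : MeasurableSpace Ω) (μ : Measure Ω),
      IsProbabilityMeasure μ → ∀ A1 B1 C1 A2 B2 C2 : Set Ω,
      MeasurableSet A1 → MeasurableSet B1 → MeasurableSet C1 →
      MeasurableSet A2 → MeasurableSet B2 → MeasurableSet C2 →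
      ∑ i : Fin 4, ∑ j : Fin 4, (μ (ghzEvents A1 B1 C1 A2 B2 C2 i j)).toReal ≤ 3) ∧
    ¬ ∃ (Ω : Type) (_ : MeasurableSpace Ω) (μ : Measure Ω),
      IsProbabilityMeasure μ ∧ ∃ A1 B1 C1 A2 B2 C2 : Set Ω,
      MeasurableSet A1 ∧ MeasurableSet B1 ∧ MeasurableSet C1 ∧
      MeasurableSet A2 ∧ MeasurableSet B2 ∧ MeasurableSet C2 ∧
      ∀ (i : Fin 4) (j : Fin 4),
        (μ (ghzEvents A1 B1 C1 A2 B2 C2 i j)).toReal = p i (Fin.castLE (by omega) j) := by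
  have hrow (i : Fin 4) : p i 0 + p i 1 + p i 2 + p i 3 = 1 := by
    have := hsum i
    rw [Fin.sum_univ_eight] at this
    linarith [hzero i 4 (by decide), hzero i 5 (by decide), hzero i 6 (by decide),
      hzero i 7 (by decide)]
  have hP : ∑ i : Fin 4, (p i 0 + p i 1 + p i 2 + p i 3) = 4 := by
    simp only [hrow, Finset.sum_const, Finset.card_univ, Fintype.card_fin]
    norm_num
  refine ⟨hP, fun _ _ μ _ _ _ _ _ _ _ ↦ sum_measureReal_ghzEvents_le_three μ, ?_⟩
  rintro ⟨Ω, _, μ, _, A1, B1, C1, A2, B2, C2, hA1, hB1, hC1, hA2, hB2, hC2, hmodel⟩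
  have hcast (i : Fin 4) : ∑ j : Fin 4, p i (Fin.castLE (by omega) j) = 1 := by
    rw [Fin.sum_univ_four]
    exact hrow i
  have h4 : ∑ i, ∑ j, μ.real (ghzEvents A1 B1 C1 A2 B2 C2 i j) = 4 := by
    simp only [measureReal_def, hmodel, hcast, Finset.sum_const, Finset.card_univ, Fintype.card_fin]
    norm_num
  linarith [sum_measureReal_ghzEvents_le_three μ hA1 hB1 hC1 hA2 hB2 hC2]
end
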